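/- arXiv:1703.07903 — 2 statements merged into one kernel-verified Lean document; each statement's English description precedes it below -/
import Mathlib

section
/- Let (X_{m,k})_{m≥1,k∈Z} be a triangular array of integrable real random variables such that: for each m the row (X_{m,k})_{k∈Z} is strictly stationary with mean 0; for each fixed k the family (X_{m,k})_{m≥1} is uniformly integrable; and the finite-dimensional distributions of (X_{m,k})_k converge, as m → ∞, to those of (X_k)_k, where (X_k)_{k∈Z} is a stationary ergodic sequence of integrable random variables. Then (1/N) Σ_{k=1}^{N} X_{m,k} converges to 0 in L¹ as min(N,m) → ∞. -/
/-
Truncate at a level `c`: by uniform integrability and stationarity, replacing every `X_{m,k}` by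
`clip c X_{m,k}` costs at most `ε` in `L¹`, uniformly in `m` and `k`. For a truncated row,
`a_m(n) = E|∑_{j<n} clip c X_{m,j}|` is subadditive and at most `n c`, hence
`a_m(N) / N ≤ a_m(n) / n + n c / N` for every `m`. The convergence of the finite-dimensional
distributions gives `a_m(n) → E|∑_{j<n} clip c Y_j|` as `m → ∞`, and by the mean ergodic theorem
(von Neumann's theorem in `L²`, read in `L¹`) this limit divided by `n` tends to `|E clip c Y_0|`,
which is at most `ε` because the rows are centred and truncation costs at most `ε`. Choosing `c`,
then `n`, then `m` and `N` large proves the claim.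
-/

open MeasureTheory Filter Topology Finset

section MeanErgodic

variable {α E : Type*} [MeasurableSpace α] {ν : Measure α} [NormedAddCommGroup E]

theorem MeasureTheory.Lp.coeFn_birkhoffSum_compMeasurePreserving {T : α → α} {p : ENNReal}
    (hT : MeasurePreserving T ν ν) (F : Lp E p ν) (n : ℕ) :
    ⇑(birkhoffSum (Lp.compMeasurePreserving T hT) id n F) =ᵐ[ν] birkhoffSum T F n := by
  induction n with
  | zero => simpa using Lp.coeFn_zero E p ν
  | succ n ih =>
    have hiter : ⇑((Lp.compMeasurePreserving T hT)^[n] F) =ᵐ[ν] F ∘ T^[n] := by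
      rw [Lp.compMeasurePreserving_iterate]
      exact Lp.coeFn_compMeasurePreserving F _
    filter_upwards [Lp.coeFn_add (birkhoffSum (Lp.compMeasurePreserving T hT) id n F)
      ((Lp.compMeasurePreserving T hT)^[n] F), ih, hiter] with x hadd hsum hcomp
    rw [birkhoffSum_succ, birkhoffSum_succ, id, hadd, Pi.add_apply, hsum, hcomp,
      Function.comp_apply]

theorem MeasureTheory.Lp.coeFn_birkhoffAverage_compMeasurePreserving [NormedSpace ℝ E] {T : α → α}
    {p : ENNReal} (hT : MeasurePreserving T ν ν) (F : Lp E p ν) (n : ℕ) :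
    ⇑(birkhoffAverage ℝ (Lp.compMeasurePreserving T hT) id n F) =ᵐ[ν]
      birkhoffAverage ℝ T F n :=
  (Lp.coeFn_smul _ _).trans
    ((Lp.coeFn_birkhoffSum_compMeasurePreserving hT F n).const_smul _)

theorem MeasureTheory.Lp.integral_norm_le_norm [IsProbabilityMeasure ν] {p : ENNReal} [Fact (1 ≤ p)]
    (h : Lp E p ν) : ∫ x, ‖h x‖ ∂ν ≤ ‖h‖ := by
  rw [integral_norm_eq_lintegral_enorm (Lp.aestronglyMeasurable h),
    ← eLpNorm_one_eq_lintegral_enorm, Lp.norm_def]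
  exact ENNReal.toReal_mono (Lp.eLpNorm_ne_top h)
    (eLpNorm_le_eLpNorm_of_exponent_le Fact.out (Lp.aestronglyMeasurable h))

theorem MeasureTheory.MeasurePreserving.integrable_birkhoffAverage [NormedSpace ℝ E] {T : α → α}
    (hT : MeasurePreserving T ν ν) {f : α → E} (hf : Integrable f ν) (n : ℕ) :
    Integrable (birkhoffAverage ℝ T f n) ν :=
  (integrable_finsetSum _ fun j _ => (hT.iterate j).integrable_comp_of_integrable hf).smul _

theorem MeasureTheory.MeasurePreserving.integral_birkhoffAverage [NormedSpace ℝ E] {T : α → α}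
    (hT : MeasurePreserving T ν ν) {f : α → E} (hf : Integrable f ν) {n : ℕ} (hn : n ≠ 0) :
    ∫ x, birkhoffAverage ℝ T f n x ∂ν = ∫ x, f x ∂ν := by
  have hcomp (j : ℕ) : ∫ x, f (T^[j] x) ∂ν = ∫ x, f x ∂ν := by
    rw [← integral_map (hT.iterate j).aemeasurable (by rw [(hT.iterate j).map_eq]; exact hf.1),
      (hT.iterate j).map_eq]
  have hint (j : ℕ) : Integrable (fun x => f (T^[j] x)) ν :=
    (hT.iterate j).integrable_comp_of_integrable hf
  simp only [birkhoffAverage, birkhoffSum]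
  rw [integral_smul, integral_finsetSum _ fun j _ => hint j]
  simp only [hcomp, sum_const, card_range, ← Nat.cast_smul_eq_nsmul ℝ, smul_smul]
  rw [inv_mul_cancel₀ (by exact_mod_cast hn), one_smul]

theorem Ergodic.tendsto_integral_abs_birkhoffAverage_sub [IsProbabilityMeasure ν] {T : α → α}
    (hT : Ergodic T ν) {f : α → ℝ} (hf : MemLp f 2 ν) :
    Tendsto (fun n => ∫ x, |birkhoffAverage ℝ T f n x - ∫ y, f y ∂ν| ∂ν) atTop (𝓝 0) := by
  have hmp := hT.toMeasurePreserving
  set U := (Lp.compMeasurePreservingₗᵢ ℝ T hmp (p := 2) (E := ℝ)).toContinuousLinearMap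
  set F := hf.toLp f
  set G := (U.eqLocus (1 : Lp ℝ 2 ν →L[ℝ] Lp ℝ 2 ν)).orthogonalProjectionOnto F
  have hconv : Tendsto (fun n => ‖birkhoffAverage ℝ U id n F - G‖) atTop (𝓝 0) :=
    tendsto_iff_norm_sub_tendsto_zero.1 <| U.tendsto_birkhoffAverage_orthogonalProjection
      (LinearIsometry.norm_toContinuousLinearMap_le _) F
  obtain ⟨b, hb⟩ : ∃ b, (G : α → ℝ) =ᵐ[ν] fun _ => b := by
    have hfix : U G = G := G.2
    refine hT.ae_eq_const_of_ae_eq_comp_ae (Lp.aestronglyMeasurable _) ?_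
    exact (hfix ▸ Lp.coeFn_compMeasurePreserving (G : Lp ℝ 2 ν) hmp).symm
  have hbound (n : ℕ) : ∫ x, |birkhoffAverage ℝ T f n x - b| ∂ν
      ≤ ‖birkhoffAverage ℝ U id n F - G‖ := by
    refine le_of_eq_of_le (integral_congr_ae ?_) (Lp.integral_norm_le_norm _)
    filter_upwards [Lp.coeFn_sub (birkhoffAverage ℝ U id n F) (G : Lp ℝ 2 ν),
      Lp.coeFn_birkhoffAverage_compMeasurePreserving hmp F n,
      hmp.quasiMeasurePreserving.birkhoffAverage_ae_eq_of_ae_eq ℝ hf.coeFn_toLp n, hb]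
      with x hsub havg hF hG
    rw [hsub, Pi.sub_apply, Real.norm_eq_abs, hG, ← hF, ← havg]
    rfl
  have hmean : ∫ y, f y ∂ν = b := by
    have hfi := hf.integrable one_le_two
    refine eq_of_abs_sub_nonpos (ge_of_tendsto hconv ?_)
    filter_upwards [eventually_ne_atTop 0] with n hn
    calc |∫ y, f y ∂ν - b|
        = |∫ x, (birkhoffAverage ℝ T f n x - b) ∂ν| := by
          rw [integral_sub (hmp.integrable_birkhoffAverage hfi n) (integrable_const b),
            hmp.integral_birkhoffAverage hfi hn, integral_const, probReal_univ, one_smul]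
      _ ≤ ∫ x, |birkhoffAverage ℝ T f n x - b| ∂ν := abs_integral_le_integral_abs
      _ ≤ _ := hbound n
  rw [hmean]
  exact squeeze_zero (fun n => integral_nonneg fun _ => abs_nonneg _) hbound hconv

end MeanErgodic

theorem shift_iterate_apply {β : Type*} (j : ℕ) (x : ℤ → β) (k : ℤ) :
    (fun (x : ℤ → β) k => x (k + 1))^[j] x k = x (k + j) := by
  induction j generalizing x with
  | zero => simp
  | succ j ih => rw [Function.iterate_succ_apply, ih]; push_cast; ring_nf

theorem Subadditive.div_le_div_add {u : ℕ → ℝ} (h : Subadditive u) (h0 : ∀ n, 0 ≤ u n) {c : ℝ}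
    (hc : ∀ n, u n ≤ n * c) {n : ℕ} (hn : n ≠ 0) (N : ℕ) : u N / N ≤ u n / n + n * c / N := by
  have hc0 : 0 ≤ c := by simpa using (h0 1).trans (hc 1)
  have hsplit : u N ≤ (N / n : ℕ) * u n + n * c :=
    calc u N = u (N / n * n + N % n) := by rw [Nat.div_add_mod']
      _ ≤ (N / n : ℕ) * u n + u (N % n) := h.apply_mul_add_le _ _ _
      _ ≤ (N / n : ℕ) * u n + n * c := by
        gcongr
        exact (hc _).trans (by gcongr; exact_mod_cast (N.mod_lt (Nat.pos_of_ne_zero hn)).le)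
  rcases N.eq_zero_or_pos with rfl | hN
  · simpa using div_nonneg (h0 n) n.cast_nonneg
  calc u N / N ≤ ((N / n : ℕ) * u n + n * c) / N := by gcongr
    _ ≤ ((N : ℝ) / n * u n + n * c) / N := by gcongr; exacts [h0 n, Nat.cast_div_le]
    _ = u n / n + n * c / N := by field_simp

theorem eventually_div_lt_of_tendsto_of_subadditive {a : ℕ → ℕ → ℝ} {A : ℕ → ℝ} {c η : ℝ}
    (hsub : ∀ m, Subadditive (a m)) (h0 : ∀ m n, 0 ≤ a m n) (hc : ∀ m n, a m n ≤ n * c)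
    (hA : ∀ n, Tendsto (fun m => a m n) atTop (𝓝 (A n))) {n : ℕ} (hn : n ≠ 0)
    (hAn : A n / n < η) : ∀ᶠ p : ℕ × ℕ in atTop, a p.2 p.1 / p.1 < η := by
  obtain ⟨η₁, hAη₁, hη₁⟩ := exists_between hAn
  have hrow : ∀ᶠ m in atTop, a m n / n < η₁ :=
    ((hA n).div_const _).eventually (gt_mem_nhds hAη₁)
  have hcol : ∀ᶠ N : ℕ in atTop, n * c / N < η - η₁ :=
    (tendsto_const_div_atTop_nhds_zero_nat _).eventually (gt_mem_nhds (sub_pos.2 hη₁))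
  rw [← prod_atTop_atTop_eq]
  filter_upwards [hcol.prod_mk hrow] with ⟨N, m⟩ ⟨hN, hm⟩
  calc a m N / N ≤ a m n / n + n * c / N := (hsub m).div_le_div_add (h0 m) (hc m) hn N
    _ < η₁ + (η - η₁) := add_lt_add hm hN
    _ = η := add_sub_cancel _ _

def clip (c x : ℝ) : ℝ := max (-c) (min x c)

theorem continuous_clip (c : ℝ) : Continuous (clip c) := by unfold clip; fun_prop

theorem abs_clip_le {c : ℝ} (hc : 0 ≤ c) (x : ℝ) : |clip c x| ≤ c := by
  unfold clip; rw [abs_le]; constructor <;> grind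

theorem clip_of_abs_le {c x : ℝ} (h : |x| ≤ c) : clip c x = x := by
  unfold clip; rw [abs_le] at h; grind

theorem abs_clip_le_abs {c : ℝ} (hc : 0 ≤ c) (x : ℝ) : |clip c x| ≤ |x| := by
  unfold clip; rcases abs_cases x with h | h <;> rw [abs_le] <;> constructor <;> grind

theorem abs_sub_clip_le {c : ℝ} (hc : 0 ≤ c) (x : ℝ) : |x - clip c x| ≤ |x| := by
  unfold clip; rcases abs_cases x with h | h <;> rw [abs_le] <;> constructor <;> grind

section Processes

variable {Ω : Type*} [MeasurableSpace Ω] {μ : Measure Ω}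

/-- `Measure.map` of a map that is not a.e.-measurable is `0`, so this is meaningful only for
a.e.-measurable `X`. -/
def IsStrictlyStationary {β : Type*} [MeasurableSpace β] (μ : Measure Ω) (X : ℤ → Ω → β) :
    Prop :=
  ∀ l : ℤ, μ.map (fun ω k => X (k + l) ω) = μ.map (fun ω k => X k ω)

theorem MeasureTheory.Integrable.clip {X : Ω → ℝ} (hX : Integrable X μ) {c : ℝ} (hc : 0 ≤ c) :
    Integrable (fun ω => clip c (X ω)) μ :=
  hX.mono ((continuous_clip c).comp_aestronglyMeasurable hX.1)
    (ae_of_all _ fun ω => abs_clip_le_abs hc (X ω))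

theorem IsStrictlyStationary.integral_comp_shift {β : Type*} [MeasurableSpace β] {X : ℤ → Ω → β}
    (hX : IsStrictlyStationary μ X) (hXm : ∀ k, AEMeasurable (X k) μ) (l : ℤ)
    {F : (ℤ → β) → ℝ} (hF : Measurable F) :
    ∫ ω, F (fun k => X (k + l) ω) ∂μ = ∫ ω, F (fun k => X k ω) ∂μ := by
  rw [← integral_map (aemeasurable_pi_lambda _ fun k => hXm (k + l)) hF.aestronglyMeasurable,
    hX l, integral_map (aemeasurable_pi_lambda _ hXm) hF.aestronglyMeasurable]

theorem IsStrictlyStationary.comp {β γ : Type*} [MeasurableSpace β] [MeasurableSpace γ]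
    {X : ℤ → Ω → β} (hX : IsStrictlyStationary μ X) (hXm : ∀ k, AEMeasurable (X k) μ)
    {g : β → γ} (hg : Measurable g) :
    IsStrictlyStationary μ (fun k ω => g (X k ω)) := by
  intro l
  have hG : Measurable fun (x : ℤ → β) k => g (x k) := by fun_prop
  have := congrArg (Measure.map fun x k => g (x k)) (hX l)
  rwa [AEMeasurable.map_map_of_aemeasurable hG.aemeasurable
      (aemeasurable_pi_lambda _ fun k => hXm (k + l)),
    AEMeasurable.map_map_of_aemeasurable hG.aemeasurable (aemeasurable_pi_lambda _ hXm)] at this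

theorem IsStrictlyStationary.integral_abs_average_Icc_eq {X : ℤ → Ω → ℝ}
    (hX : IsStrictlyStationary μ X) (hXm : ∀ k, AEMeasurable (X k) μ) (N : ℕ) :
    ∫ ω, |(N : ℝ)⁻¹ * ∑ k ∈ Icc 1 N, X k ω| ∂μ = ∫ ω, |(N : ℝ)⁻¹ * ∑ j ∈ range N, X j ω| ∂μ := by
  have hreindex (ω : Ω) : ∑ k ∈ Icc 1 N, X k ω = ∑ j ∈ range N, X (j + 1) ω := by
    rw [← Ico_add_one_right_eq_Icc, sum_Ico_eq_sum_range, Nat.add_sub_cancel]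
    simp [add_comm]
  simp_rw [hreindex]
  exact hX.integral_comp_shift hXm 1 (F := fun x => |(N : ℝ)⁻¹ * ∑ j ∈ range N, x j|)
    (by fun_prop)

theorem IsStrictlyStationary.subadditive_integral_abs_sum {Z : ℤ → Ω → ℝ}
    (hZ : IsStrictlyStationary μ Z) (hZi : ∀ k, Integrable (Z k) μ) :
    Subadditive fun n => ∫ ω, |∑ j ∈ range n, Z j ω| ∂μ := by
  intro m n
  have hsplit (ω : Ω) : ∑ j ∈ range (m + n), Z j ω
      = ∑ j ∈ range m, Z j ω + ∑ j ∈ range n, Z (j + m) ω := by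
    simp [sum_range_add, add_comm]
  have hshift : ∫ ω, |∑ j ∈ range n, Z (j + m) ω| ∂μ = ∫ ω, |∑ j ∈ range n, Z j ω| ∂μ :=
    hZ.integral_comp_shift (fun k => (hZi k).aemeasurable) m (F := fun x => |∑ j ∈ range n, x j|)
      (by fun_prop)
  have h₁ : Integrable (fun ω => ∑ j ∈ range m, Z j ω) μ :=
    integrable_finsetSum _ fun j _ => hZi _
  have h₂ : Integrable (fun ω => ∑ j ∈ range n, Z (j + m) ω) μ :=
    integrable_finsetSum _ fun j _ => hZi _
  simp only [hsplit]
  calc ∫ ω, |∑ j ∈ range m, Z j ω + ∑ j ∈ range n, Z (j + m) ω| ∂μ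
      ≤ ∫ ω, (|∑ j ∈ range m, Z j ω| + |∑ j ∈ range n, Z (j + m) ω|) ∂μ :=
        integral_mono (h₁.add h₂).abs (h₁.abs.add h₂.abs) fun ω => abs_add_le _ _
    _ = _ := by rw [integral_add h₁.abs h₂.abs, hshift]

theorem integral_abs_sub_clip_le {X : Ω → ℝ} (hX : Integrable X μ) {c₀ c : ℝ} (hc : 0 ≤ c)
    (hc₀ : c₀ ≤ c) : ∫ ω, |X ω - clip c (X ω)| ∂μ ≤ ∫ ω in {ω | c₀ ≤ |X ω|}, |X ω| ∂μ := by
  have hint : Integrable (fun ω => |X ω - clip c (X ω)|) μ := (hX.sub (hX.clip hc)).abs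
  rw [← setIntegral_eq_integral_of_forall_compl_eq_zero fun ω hω => ?_]
  · exact setIntegral_mono hint.integrableOn hX.abs.integrableOn fun ω => abs_sub_clip_le hc _
  · rw [clip_of_abs_le ((not_le.1 hω).le.trans hc₀), sub_self, abs_zero]

theorem IsStrictlyStationary.integral_abs_sub_clip_le {X : ℤ → Ω → ℝ}
    (hX : IsStrictlyStationary μ X) (hXi : ∀ k, Integrable (X k) μ) {c₀ c : ℝ} (hc : 0 ≤ c)
    (hc₀ : c₀ ≤ c) (k : ℤ) :
    ∫ ω, |X k ω - clip c (X k ω)| ∂μ ≤ ∫ ω in {ω | c₀ ≤ |X 0 ω|}, |X 0 ω| ∂μ := by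
  have hshift := hX.integral_comp_shift (fun k => (hXi k).aemeasurable) k
    (F := fun x => |x 0 - clip c (x 0)|) (by have := continuous_clip c; fun_prop)
  simp only [zero_add] at hshift
  exact hshift ▸ _root_.integral_abs_sub_clip_le (hXi 0) hc hc₀

theorem integral_abs_average_le {Z W : ℕ → Ω → ℝ} (hZ : ∀ j, Integrable (Z j) μ)
    (hW : ∀ j, Integrable (W j) μ) {δ : ℝ} (h : ∀ j, ∫ ω, |Z j ω - W j ω| ∂μ ≤ δ) (N : ℕ) :
    ∫ ω, |(N : ℝ)⁻¹ * ∑ j ∈ range N, Z j ω| ∂μ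
      ≤ δ + (∫ ω, |∑ j ∈ range N, W j ω| ∂μ) / N := by
  rcases N.eq_zero_or_pos with rfl | hN
  · simpa using (integral_nonneg fun _ => abs_nonneg _).trans (h 0)
  have hdiff (j : ℕ) : Integrable (fun ω => |Z j ω - W j ω|) μ := ((hZ j).sub (hW j)).abs
  have hsumdiff : Integrable (fun ω => ∑ j ∈ range N, |Z j ω - W j ω|) μ :=
    integrable_finsetSum _ fun j _ => hdiff j
  have hsumW : Integrable (fun ω => ∑ j ∈ range N, W j ω) μ :=
    integrable_finsetSum _ fun j _ => hW j
  have hpt (ω : Ω) : |(N : ℝ)⁻¹ * ∑ j ∈ range N, Z j ω|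
      ≤ (N : ℝ)⁻¹ * ∑ j ∈ range N, |Z j ω - W j ω| + |∑ j ∈ range N, W j ω| / N := by
    have : ∑ j ∈ range N, Z j ω = ∑ j ∈ range N, (Z j ω - W j ω) + ∑ j ∈ range N, W j ω := by
      rw [← sum_add_distrib]; simp
    rw [this, mul_add, div_eq_inv_mul]
    refine (abs_add_le _ _).trans (add_le_add ?_ ?_) <;>
      rw [abs_mul, abs_of_pos (by positivity)]
    gcongr
    exact abs_sum_le_sum_abs _ _
  calc ∫ ω, |(N : ℝ)⁻¹ * ∑ j ∈ range N, Z j ω| ∂μ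
      ≤ ∫ ω, ((N : ℝ)⁻¹ * ∑ j ∈ range N, |Z j ω - W j ω| + |∑ j ∈ range N, W j ω| / N) ∂μ :=
        integral_mono ((integrable_finsetSum _ fun j _ => hZ j).const_mul _).abs
          ((hsumdiff.const_mul _).add (hsumW.abs.div_const _)) hpt
    _ = (N : ℝ)⁻¹ * ∑ j ∈ range N, ∫ ω, |Z j ω - W j ω| ∂μ
          + (∫ ω, |∑ j ∈ range N, W j ω| ∂μ) / N := by
        rw [integral_add (hsumdiff.const_mul _) (hsumW.abs.div_const _), integral_const_mul,
          integral_finsetSum _ fun j _ => hdiff j, integral_div]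
    _ ≤ (N : ℝ)⁻¹ * (N * δ) + (∫ ω, |∑ j ∈ range N, W j ω| ∂μ) / N := by
        gcongr
        simpa using sum_le_sum fun j (_ : j ∈ range N) => h j
    _ = δ + (∫ ω, |∑ j ∈ range N, W j ω| ∂μ) / N := by field_simp

theorem integral_abs_sum_range_le [IsProbabilityMeasure μ] {Z : ℕ → Ω → ℝ} {c : ℝ}
    (hZ : ∀ j ω, |Z j ω| ≤ c) (n : ℕ) : ∫ ω, |∑ j ∈ range n, Z j ω| ∂μ ≤ n * c := by
  refine (integral_mono_of_nonneg (ae_of_all _ fun _ => abs_nonneg _) (integrable_const (n * c))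
    (ae_of_all _ fun ω => ?_)).trans (by simp)
  exact (abs_sum_le_sum_abs _ _).trans (by simpa using sum_le_sum fun j (_ : j ∈ range n) => hZ j ω)

theorem tendsto_integral_abs_average_sub_of_ergodic [IsProbabilityMeasure μ] {Y : ℤ → Ω → ℝ}
    (hY : ∀ k, AEMeasurable (Y k) μ)
    (herg : Ergodic (fun x : ℤ → ℝ => fun k => x (k + 1)) (μ.map fun ω k => Y k ω))
    {g : ℝ → ℝ} (hg : Measurable g) {c : ℝ} (hgc : ∀ x, |g x| ≤ c) :
    Tendsto (fun n : ℕ => ∫ ω, |(n : ℝ)⁻¹ * ∑ j ∈ range n, g (Y j ω) - ∫ ω, g (Y 0 ω) ∂μ| ∂μ)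
      atTop (𝓝 0) := by
  have hYm : AEMeasurable (fun ω k => Y k ω) μ := aemeasurable_pi_lambda _ hY
  have : IsProbabilityMeasure (μ.map fun ω k => Y k ω) := Measure.isProbabilityMeasure_map hYm
  have hg₀ : Measurable fun x : ℤ → ℝ => g (x 0) := by fun_prop
  have hbA (n : ℕ) : birkhoffAverage ℝ (fun x : ℤ → ℝ => fun k => x (k + 1)) (fun x => g (x 0)) n
      = fun x => (n : ℝ)⁻¹ * ∑ j ∈ range n, g (x j) := by
    funext x; simp [birkhoffAverage, birkhoffSum, shift_iterate_apply]
  refine (herg.tendsto_integral_abs_birkhoffAverage_sub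
    (.of_bound hg₀.aestronglyMeasurable c (ae_of_all _ fun x => hgc (x 0)))).congr fun n => ?_
  rw [hbA, integral_map hYm hg₀.aestronglyMeasurable, integral_map hYm (by fun_prop : Measurable
    fun x : ℤ → ℝ => |(n : ℝ)⁻¹ * ∑ j ∈ range n, g (x j) - ∫ ω, g (Y 0 ω) ∂μ|).aestronglyMeasurable]

theorem eventually_integral_abs_sum_div_lt [IsProbabilityMeasure μ] {Y : ℤ → Ω → ℝ}
    (hY : ∀ k, AEMeasurable (Y k) μ)
    (herg : Ergodic (fun x : ℤ → ℝ => fun k => x (k + 1)) (μ.map fun ω k => Y k ω))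
    {g : ℝ → ℝ} (hg : Measurable g) {c : ℝ} (hgc : ∀ x, |g x| ≤ c) {η : ℝ}
    (hη : |∫ ω, g (Y 0 ω) ∂μ| < η) :
    ∀ᶠ n : ℕ in atTop, (∫ ω, |∑ j ∈ range n, g (Y j ω)| ∂μ) / n < η := by
  set I := ∫ ω, g (Y 0 ω) ∂μ
  have hgY (k : ℤ) : Integrable (fun ω => g (Y k ω)) μ :=
    .of_bound (hg.comp_aemeasurable (hY k)).aestronglyMeasurable c (ae_of_all _ fun ω => hgc _)
  have havg (n : ℕ) : Integrable (fun ω => (n : ℝ)⁻¹ * ∑ j ∈ range n, g (Y j ω)) μ :=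
    (integrable_finsetSum (range n) fun (j : ℕ) _ => hgY j).const_mul _
  have hdev (n : ℕ) : Integrable (fun ω => |(n : ℝ)⁻¹ * ∑ j ∈ range n, g (Y j ω) - I|) μ :=
    ((havg n).sub (integrable_const I)).abs
  filter_upwards [(tendsto_integral_abs_average_sub_of_ergodic hY herg hg hgc).eventually
    (gt_mem_nhds (sub_pos.2 hη))] with n hn
  calc (∫ ω, |∑ j ∈ range n, g (Y j ω)| ∂μ) / n
      = ∫ ω, |(n : ℝ)⁻¹ * ∑ j ∈ range n, g (Y j ω)| ∂μ := by
        rw [← integral_div]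
        simp only [inv_mul_eq_div, abs_div, Nat.abs_cast]
    _ ≤ ∫ ω, (|(n : ℝ)⁻¹ * ∑ j ∈ range n, g (Y j ω) - I| + |I|) ∂μ :=
        integral_mono (havg n).abs ((hdev n).add (integrable_const _)) fun ω => by
          simpa using abs_sub_le ((n : ℝ)⁻¹ * ∑ j ∈ range n, g (Y j ω)) I 0
    _ = ∫ ω, |(n : ℝ)⁻¹ * ∑ j ∈ range n, g (Y j ω) - I| ∂μ + |I| := by
        simp [integral_add (hdev n) (integrable_const _)]
    _ < η := by linarith

theorem tendsto_integral_abs_sum_of_fdd {X : ℕ → ℤ → Ω → ℝ} {Y : ℤ → Ω → ℝ}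
    (hfdd : ∀ (r : ℕ) (ks : Fin r → ℤ) (φ : BoundedContinuousFunction (Fin r → ℝ) ℝ),
      Tendsto (fun m : ℕ => ∫ ω, φ (fun i => X m (ks i) ω) ∂μ) atTop
        (𝓝 (∫ ω, φ (fun i => Y (ks i) ω) ∂μ)))
    {g : ℝ → ℝ} (hg : Continuous g) {c : ℝ} (hgc : ∀ x, |g x| ≤ c) (n : ℕ) :
    Tendsto (fun m => ∫ ω, |∑ j ∈ range n, g (X m j ω)| ∂μ) atTop
      (𝓝 (∫ ω, |∑ j ∈ range n, g (Y j ω)| ∂μ)) := by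
  have hbound (v : Fin n → ℝ) : ‖|∑ i, g (v i)|‖ ≤ n * c := by
    simpa using (abs_sum_le_sum_abs _ _).trans (sum_le_sum fun i (_ : i ∈ univ) => hgc (v i))
  have hsum (x : ℤ → ℝ) : ∑ i : Fin n, g (x (i : ℕ)) = ∑ j ∈ range n, g (x j) :=
    Fin.sum_univ_eq_sum_range (fun j => g (x j)) n
  have h := hfdd n (fun i => (i : ℕ)) (.ofNormedAddCommGroup _ (by fun_prop) _ hbound)
  change Tendsto (fun m => ∫ ω, |∑ i : Fin n, g (X m (i : ℕ) ω)| ∂μ) atTop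
    (𝓝 (∫ ω, |∑ i : Fin n, g (Y (i : ℕ) ω)| ∂μ)) at h
  convert h using 5
  · exact (hsum fun k => X _ k _).symm
  · exact (hsum fun k => Y k _).symm

theorem abs_integral_clip_le_of_fdd {X : ℕ → ℤ → Ω → ℝ} {Y : ℤ → Ω → ℝ}
    (hfdd : ∀ (r : ℕ) (ks : Fin r → ℤ) (φ : BoundedContinuousFunction (Fin r → ℝ) ℝ),
      Tendsto (fun m : ℕ => ∫ ω, φ (fun i => X m (ks i) ω) ∂μ) atTop
        (𝓝 (∫ ω, φ (fun i => Y (ks i) ω) ∂μ)))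
    (hX : ∀ m, Integrable (X m 0) μ) (hmean : ∀ m, ∫ ω, X m 0 ω ∂μ = 0) {c δ : ℝ} (hc : 0 ≤ c)
    (htail : ∀ m, ∫ ω, |X m 0 ω - clip c (X m 0 ω)| ∂μ ≤ δ) :
    |∫ ω, clip c (Y 0 ω) ∂μ| ≤ δ := by
  have h := hfdd 1 (fun _ => 0) (.ofNormedAddCommGroup (fun v => clip c (v 0))
    (by have := continuous_clip c; fun_prop) c fun _ => abs_clip_le hc _)
  change Tendsto (fun m => ∫ ω, clip c (X m 0 ω) ∂μ) atTop (𝓝 (∫ ω, clip c (Y 0 ω) ∂μ)) at h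
  refine le_of_tendsto h.abs (.of_forall fun m => ?_)
  calc |∫ ω, clip c (X m 0 ω) ∂μ| = |∫ ω, (X m 0 ω - clip c (X m 0 ω)) ∂μ| := by
        rw [integral_sub (hX m) ((hX m).clip hc), hmean, zero_sub, abs_neg]
    _ ≤ ∫ ω, |X m 0 ω - clip c (X m 0 ω)| ∂μ := abs_integral_le_integral_abs
    _ ≤ δ := htail m

end Processes

theorem lln_triangular_array_ergodic_general
    {Ω : Type*} [MeasurableSpace Ω] (μ : Measure Ω) [IsProbabilityMeasure μ]
    (X : ℕ → ℤ → Ω → ℝ) (Y : ℤ → Ω → ℝ)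
    -- integrability
    (hint : ∀ m k, Integrable (X m k) μ)
    -- each row is strictly stationary with mean 0
    (hstat : ∀ (m : ℕ) (l : ℤ),
      Measure.map (fun ω (k : ℤ) => X m (k + l) ω) μ
        = Measure.map (fun ω (k : ℤ) => X m k ω) μ)
    (hmean : ∀ m k, ∫ ω, X m k ω ∂μ = 0)
    -- uniform integrability in `m` for each fixed `k`
    (hUI : ∀ (k : ℤ) (ε : ℝ), 0 < ε → ∃ c : ℝ, ∀ m : ℕ,
      ∫ ω in {ω | c ≤ |X m k ω|}, |X m k ω| ∂μ ≤ ε)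
    -- the finite-dimensional distributions converge to those of `(Y_k)`
    (hfdd : ∀ (r : ℕ) (ks : Fin r → ℤ) (φ : BoundedContinuousFunction (Fin r → ℝ) ℝ),
      Tendsto (fun m : ℕ => ∫ ω, φ (fun i => X m (ks i) ω) ∂μ) atTop
        (𝓝 (∫ ω, φ (fun i => Y (ks i) ω) ∂μ)))
    -- `(Y_k)` is stationary, ergodic and integrable
    (hYerg : Ergodic (fun x : ℤ → ℝ => fun k => x (k + 1))
      (Measure.map (fun ω (k : ℤ) => Y k ω) μ))
    (hYint : ∀ k : ℤ, Integrable (Y k) μ) :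
    Tendsto
      (fun p : ℕ × ℕ => ∫ ω, |(p.1 : ℝ)⁻¹ * ∑ k ∈ Finset.Icc 1 p.1, X p.2 (k : ℤ) ω| ∂μ)
      atTop (𝓝 0) := by
  have hXm (m : ℕ) (k : ℤ) : AEMeasurable (X m k) μ := (hint m k).aemeasurable
  have hrow (m : ℕ) : IsStrictlyStationary μ (X m) := hstat m
  refine tendsto_order.2 ⟨fun a ha => .of_forall fun _ =>
    ha.trans_le (integral_nonneg fun _ => abs_nonneg _), fun ε hε => ?_⟩
  obtain ⟨c₀, hc₀⟩ := hUI 0 (ε / 3) (by positivity)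
  set c := max c₀ 0
  have hc : 0 ≤ c := le_max_right _ _
  have htail (m : ℕ) (k : ℤ) : ∫ ω, |X m k ω - clip c (X m k ω)| ∂μ ≤ ε / 3 :=
    ((hrow m).integral_abs_sub_clip_le (hint m) hc (le_max_left _ _) k).trans (hc₀ m)
  have hlimmean : |∫ ω, clip c (Y 0 ω) ∂μ| < 2 * (ε / 3) :=
    (abs_integral_clip_le_of_fdd hfdd (fun m => hint m 0) (fun m => hmean m 0) hc
      fun m => htail m 0).trans_lt (by linarith)
  obtain ⟨n, hAn, hn⟩ := ((eventually_integral_abs_sum_div_lt (fun k => (hYint k).aemeasurable)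
    hYerg (continuous_clip c).measurable (abs_clip_le hc) hlimmean).and
    (eventually_ne_atTop 0)).exists
  have hrows := eventually_div_lt_of_tendsto_of_subadditive
    (fun m => ((hrow m).comp (hXm m) (continuous_clip c).measurable).subadditive_integral_abs_sum
      fun k => (hint m k).clip hc)
    (fun _ _ => integral_nonneg fun _ => abs_nonneg _)
    (fun _ => integral_abs_sum_range_le fun _ _ => abs_clip_le hc _)
    (tendsto_integral_abs_sum_of_fdd hfdd (continuous_clip c) (abs_clip_le hc)) hn hAn
  filter_upwards [hrows] with ⟨N, m⟩ hN
  calc _ = ∫ ω, |(N : ℝ)⁻¹ * ∑ j ∈ range N, X m j ω| ∂μ :=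
        (hrow m).integral_abs_average_Icc_eq (hXm m) N
    _ ≤ ε / 3 + (∫ ω, |∑ j ∈ range N, clip c (X m j ω)| ∂μ) / N :=
        integral_abs_average_le (hint m ·) (fun j => (hint m j).clip hc) (htail m ·) N
    _ < ε := by linarith

/-- **Law of large numbers for a triangular array with ergodic limit**:
`(1/N) Σ_{k=1}^N X_{m,k} → 0` in `L¹` as `min(N,m) → ∞`. -/
theorem lln_triangular_array_ergodic
    {Ω : Type*} [MeasurableSpace Ω] (μ : Measure Ω) [IsProbabilityMeasure μ]
    (X : ℕ → ℤ → Ω → ℝ) (Y : ℤ → Ω → ℝ)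
    -- integrability
    (hint : ∀ m k, Integrable (X m k) μ)
    -- each row is strictly stationary with mean 0
    (hstat : ∀ (m : ℕ) (l : ℤ),
      Measure.map (fun ω (k : ℤ) => X m (k + l) ω) μ
        = Measure.map (fun ω (k : ℤ) => X m k ω) μ)
    (hmean : ∀ m k, ∫ ω, X m k ω ∂μ = 0)
    -- uniform integrability in `m` for each fixed `k`
    (hUI : ∀ (k : ℤ) (ε : ℝ), 0 < ε → ∃ c : ℝ, ∀ m : ℕ,
      ∫ ω in {ω | c ≤ |X m k ω|}, |X m k ω| ∂μ ≤ ε)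
    -- the finite-dimensional distributions converge to those of `(Y_k)`
    (hfdd : ∀ (r : ℕ) (ks : Fin r → ℤ) (φ : BoundedContinuousFunction (Fin r → ℝ) ℝ),
      Tendsto (fun m : ℕ => ∫ ω, φ (fun i => X m (ks i) ω) ∂μ) atTop
        (𝓝 (∫ ω, φ (fun i => Y (ks i) ω) ∂μ)))
    -- `(Y_k)` is stationary, ergodic and integrable
    (hYmeas : ∀ k, Measurable (Y k))
    (hYerg : Ergodic (fun x : ℤ → ℝ => fun k => x (k + 1))
      (Measure.map (fun ω (k : ℤ) => Y k ω) μ))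
    (hYint : ∀ k : ℤ, Integrable (Y k) μ) :
    Tendsto
      (fun p : ℕ × ℕ => ∫ ω, |(p.1 : ℝ)⁻¹ * ∑ k ∈ Finset.Icc 1 p.1, X p.2 (k : ℤ) ω| ∂μ)
      atTop (𝓝 0) :=
  lln_triangular_array_ergodic_general μ X Y hint hstat hmean hUI hfdd hYerg hYint
end

section
/- Assume the filtration is commuting, the regularity condition holds, and X_0 is centered and square-integrable. Then for λ²-almost every t ∈ I, the random variable D_0(t) is a martingale difference in each coordinate: E(D_0(t) | F_{0,−1}) = 0 a.s. and E(D_0(t) | F_{−1,0}) = 0 a.s. -/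
/-!
Every summand `P_{0,0} X_j` of the partial sums is orthogonal to `F_{0,-1}` and to `F_{-1,0}`:
conditioning the four terms of `P_{0,0}` on such a σ-algebra, the commuting property makes them
cancel in pairs. So every partial sum is a martingale difference in both directions, and since
conditional expectation is a contraction of `Lᵖ` for `p ≥ 1`, this passes to the `L²` limit `D₀(t)`.
-/

open MeasureTheory ProbabilityTheory Filter Complex Topology

noncomputable section

/-- The filtration `F_{k,ℓ} = σ(ξ_{j,u} : j ≤ k, u ≤ ℓ)` generated by the random field `ξ`. -/
def F2 {Ω : Type*} (ξ : ℤ × ℤ → Ω → ℝ) (k ℓ : ℤ) : MeasurableSpace Ω :=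
  ⨆ (p : ℤ × ℤ) (_ : p.1 ≤ k ∧ p.2 ≤ ℓ), MeasurableSpace.comap (ξ p) inferInstance

/-- The filtration is commuting: `E_{u,v} E_{a,b} X = E_{u∧a, v∧b} X` a.s. for integrable `X`. -/
def Commuting2 {Ω : Type*} [MeasurableSpace Ω] (μ : Measure Ω) (ξ : ℤ × ℤ → Ω → ℝ) : Prop :=
  ∀ (Y : Ω → ℂ), Integrable Y μ → ∀ u v a b : ℤ,
    μ[μ[Y | F2 ξ a b] | F2 ξ u v] =ᵐ[μ] μ[Y | F2 ξ (min u a) (min v b)]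

/-- The regularity condition: `E(X₀ | F_{-∞,0}) = 0` and `E(X₀ | F_{0,-∞}) = 0` a.s. -/
def Regular2 {Ω : Type*} [MeasurableSpace Ω] (μ : Measure Ω) (ξ : ℤ × ℤ → Ω → ℝ)
    (X0 : Ω → ℂ) : Prop :=
  μ[X0 | ⨅ u : ℤ, F2 ξ u 0] =ᵐ[μ] 0 ∧ μ[X0 | ⨅ v : ℤ, F2 ξ 0 v] =ᵐ[μ] 0

/-- Strict stationarity of the random field `ξ`. -/
def Stationary2 {Ω : Type*} [MeasurableSpace Ω] (μ : Measure Ω) (ξ : ℤ × ℤ → Ω → ℝ) : Prop :=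
  ∀ w : ℤ × ℤ,
    Measure.map (fun ω (p : ℤ × ℤ) => ξ (p + w) ω) μ = Measure.map (fun ω (p : ℤ × ℤ) => ξ p ω) μ

/-- The vertical shift on `ℝ^{ℤ²}`. -/
def shiftT : (ℤ × ℤ → ℝ) → ℤ × ℤ → ℝ := fun x p => x (p.1 + 1, p.2)

/-- The horizontal shift on `ℝ^{ℤ²}`. -/
def shiftS : (ℤ × ℤ → ℝ) → ℤ × ℤ → ℝ := fun x p => x (p.1, p.2 + 1)

/-- The discrete Fourier transform `S_n(t) = Σ_{1 ≤ u ≤ n} e^{i u·t} X_u`. -/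
def dft2 {Ω : Type*} (X : ℤ × ℤ → Ω → ℂ) (n : ℕ × ℕ) (t : ℝ × ℝ) (ω : Ω) : ℂ :=
  ∑ u ∈ Finset.Icc 1 n.1 ×ˢ Finset.Icc 1 n.2,
    Complex.exp (Complex.I * ((u.1 : ℝ) * t.1 + (u.2 : ℝ) * t.2)) * X ((u.1 : ℤ), (u.2 : ℤ)) ω

/-- `I = [-π, π)²`. -/
def I2 : Set (ℝ × ℝ) := Set.Ico (-Real.pi) Real.pi ×ˢ Set.Ico (-Real.pi) Real.pi

/-- The projection operator `P_{u,v} X = E_{u,v}X − E_{u,v−1}X − E_{u−1,v}X + E_{u−1,v−1}X`. -/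
def P2 {Ω : Type*} [MeasurableSpace Ω] (μ : Measure Ω) (ξ : ℤ × ℤ → Ω → ℝ) (u : ℤ × ℤ)
    (X : Ω → ℂ) : Ω → ℂ :=
  μ[X | F2 ξ u.1 u.2] - μ[X | F2 ξ u.1 (u.2 - 1)] - μ[X | F2 ξ (u.1 - 1) u.2]
    + μ[X | F2 ξ (u.1 - 1) (u.2 - 1)]

/-- The partial sums `Σ_{j ∈ [−n,n]²} e^{−i j·t} P_{0,0} X_j` defining `D₀(t)`. -/
def Dpart {Ω : Type*} [MeasurableSpace Ω] (μ : Measure Ω) (ξ : ℤ × ℤ → Ω → ℝ)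
    (X : ℤ × ℤ → Ω → ℂ) (n : ℕ) (t : ℝ × ℝ) (ω : Ω) : ℂ :=
  ∑ j ∈ Finset.Icc (-(n : ℤ)) (n : ℤ) ×ˢ Finset.Icc (-(n : ℤ)) (n : ℤ),
    Complex.exp (-Complex.I * ((j.1 : ℝ) * t.1 + (j.2 : ℝ) * t.2)) * P2 μ ξ (0, 0) (X j) ω

theorem condExp_ae_eq_zero_of_tendsto_eLpNorm {α E ι : Type*} {m m0 : MeasurableSpace α}
    {μ : Measure α} [IsFiniteMeasure μ] [NormedAddCommGroup E] [NormedSpace ℝ E] [CompleteSpace E]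
    {l : Filter ι} [l.NeBot] {p : ENNReal} (hp : 1 ≤ p) {F : ι → α → E} {f : α → E}
    (hF : ∀ i, Integrable (F i) μ) (hf : AEStronglyMeasurable f μ)
    (hlim : Tendsto (fun i => eLpNorm (F i - f) p μ) l (𝓝 0)) (h0 : ∀ i, μ[F i | m] =ᵐ[μ] 0) :
    μ[f | m] =ᵐ[μ] 0 := by
  obtain ⟨i₀, hi₀⟩ := (hlim.eventually_lt_const ENNReal.zero_lt_top).exists
  have hf_int : Integrable f μ := by
    simpa using (hF i₀).sub (MemLp.integrable hp ⟨(hF i₀).1.sub hf, hi₀⟩)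
  have hbound : ∀ i, eLpNorm μ[f | m] p μ ≤ eLpNorm (F i - f) p μ := fun i =>
    calc eLpNorm μ[f | m] p μ = eLpNorm μ[f - F i | m] p μ := by
          refine eLpNorm_congr_ae ?_
          filter_upwards [h0 i, condExp_sub hf_int (hF i) m] with x hx hsub
          simp [hsub, hx]
      _ ≤ eLpNorm (f - F i) p μ := eLpNorm_condExp_le_eLpNorm _ hp
      _ = eLpNorm (F i - f) p μ := eLpNorm_sub_comm _ _ _ _
  refine (eLpNorm_eq_zero_iff integrable_condExp.aestronglyMeasurable
    (zero_lt_one.trans_le hp).ne').mp ?_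
  exact nonpos_iff_eq_zero.mp (ge_of_tendsto' hlim hbound)

section Projection

variable {Ω : Type*} [MeasurableSpace Ω] {μ : Measure Ω} {ξ : ℤ × ℤ → Ω → ℝ}

theorem integrable_P2 (u : ℤ × ℤ) (Y : Ω → ℂ) : Integrable (P2 μ ξ u Y) μ := by
  unfold P2
  refine ((Integrable.sub ?_ ?_).sub ?_).add ?_ <;> exact integrable_condExp

theorem P2_of_not_integrable (u : ℤ × ℤ) {Y : Ω → ℂ} (hY : ¬Integrable Y μ) : P2 μ ξ u Y = 0 := by
  simp [P2, condExp_of_not_integrable hY]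

theorem condExp_P2_ae_eq (hcomm : Commuting2 μ ξ) (u : ℤ × ℤ) {Y : Ω → ℂ}
    (hY : Integrable Y μ) (a b : ℤ) :
    μ[P2 μ ξ u Y | F2 ξ a b] =ᵐ[μ]
      μ[Y | F2 ξ (min a u.1) (min b u.2)] - μ[Y | F2 ξ (min a u.1) (min b (u.2 - 1))]
        - μ[Y | F2 ξ (min a (u.1 - 1)) (min b u.2)]
        + μ[Y | F2 ξ (min a (u.1 - 1)) (min b (u.2 - 1))] := by
  set E : ℤ → ℤ → Ω → ℂ := fun k ℓ => μ[Y | F2 ξ k ℓ]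
  have hE : ∀ k ℓ, Integrable (E k ℓ) μ := fun _ _ => integrable_condExp
  have hlin : μ[P2 μ ξ u Y | F2 ξ a b] =ᵐ[μ]
      μ[E u.1 u.2 | F2 ξ a b] - μ[E u.1 (u.2 - 1) | F2 ξ a b]
        - μ[E (u.1 - 1) u.2 | F2 ξ a b] + μ[E (u.1 - 1) (u.2 - 1) | F2 ξ a b] :=
    (condExp_add (((hE _ _).sub (hE _ _)).sub (hE _ _)) (hE _ _) _).trans <|
      ((condExp_sub ((hE _ _).sub (hE _ _)) (hE _ _) _).trans <|
        (condExp_sub (hE _ _) (hE _ _) _).sub .rfl).add .rfl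
  exact hlin.trans ((((hcomm Y hY a b _ _).sub (hcomm Y hY a b _ _)).sub
    (hcomm Y hY a b _ _)).add (hcomm Y hY a b _ _))

theorem condExp_P2_ae_eq_zero_of_snd_lt (hcomm : Commuting2 μ ξ) {u : ℤ × ℤ} (Y : Ω → ℂ)
    {a b : ℤ} (hb : b < u.2) : μ[P2 μ ξ u Y | F2 ξ a b] =ᵐ[μ] 0 := by
  by_cases hY : Integrable Y μ
  · filter_upwards [condExp_P2_ae_eq hcomm u hY a b] with ω hω
    rw [hω, min_eq_left hb.le, min_eq_left (by omega : b ≤ u.2 - 1)]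
    simp
  · simp [P2_of_not_integrable u hY]

theorem condExp_P2_ae_eq_zero_of_fst_lt (hcomm : Commuting2 μ ξ) {u : ℤ × ℤ} (Y : Ω → ℂ)
    {a b : ℤ} (ha : a < u.1) : μ[P2 μ ξ u Y | F2 ξ a b] =ᵐ[μ] 0 := by
  by_cases hY : Integrable Y μ
  · filter_upwards [condExp_P2_ae_eq hcomm u hY a b] with ω hω
    rw [hω, min_eq_left ha.le, min_eq_left (by omega : a ≤ u.1 - 1)]
    simp
  · simp [P2_of_not_integrable u hY]

end Projection

section PartialSums

variable {Ω : Type*} {m m0 : MeasurableSpace Ω} {μ : Measure Ω} {ξ : ℤ × ℤ → Ω → ℝ}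
  {X : ℤ × ℤ → Ω → ℂ}

theorem Dpart_eq_sum (n : ℕ) (t : ℝ × ℝ) :
    Dpart μ ξ X n t = ∑ j ∈ Finset.Icc (-(n : ℤ)) n ×ˢ Finset.Icc (-(n : ℤ)) n,
      Complex.exp (-Complex.I * ((j.1 : ℝ) * t.1 + (j.2 : ℝ) * t.2)) • P2 μ ξ (0, 0) (X j) := by
  funext ω
  simp [Dpart, Finset.sum_apply]

theorem integrable_Dpart (n : ℕ) (t : ℝ × ℝ) : Integrable (Dpart μ ξ X n t) μ := by
  rw [Dpart_eq_sum]
  exact integrable_finsetSum' _ fun j _ => (integrable_P2 _ _).smul _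

theorem condExp_Dpart_ae_eq_zero
    (hP : ∀ Y : Ω → ℂ, μ[P2 μ ξ (0, 0) Y | m] =ᵐ[μ] 0) (n : ℕ) (t : ℝ × ℝ) :
    μ[Dpart μ ξ X n t | m] =ᵐ[μ] 0 := by
  rw [Dpart_eq_sum]
  refine (condExp_finsetSum (fun j _ => (integrable_P2 _ _).smul _) m).trans ?_
  refine (eventuallyEq_sum fun j _ => (condExp_smul _ _ m).trans ((hP (X j)).const_smul _)).trans ?_
  simp

end PartialSums

theorem D0_martingale_difference_general
    {Ω : Type*} [MeasurableSpace Ω] (μ : Measure Ω) [IsProbabilityMeasure μ]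
    (ξ : ℤ × ℤ → Ω → ℝ) (X : ℤ × ℤ → Ω → ℂ) (D : ℝ × ℝ → Ω → ℂ)
    (hcomm : Commuting2 μ ξ)
    (hD : ∀ᵐ t ∂(volume.restrict I2),
      (∀ᵐ ω ∂μ, Tendsto (fun n => Dpart μ ξ X n t ω) atTop (𝓝 (D t ω))) ∧
      Tendsto (fun n => eLpNorm (fun ω => Dpart μ ξ X n t ω - D t ω) 2 μ) atTop (𝓝 0)) :
    ∀ᵐ t ∂(volume.restrict I2),
      μ[D t | F2 ξ 0 (-1)] =ᵐ[μ] 0 ∧ μ[D t | F2 ξ (-1) 0] =ᵐ[μ] 0 := by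
  filter_upwards [hD] with t ⟨hae, hL2⟩
  have hDt : AEStronglyMeasurable (D t) μ :=
    aestronglyMeasurable_of_tendsto_ae atTop
      (fun n => (integrable_Dpart n t).aestronglyMeasurable) hae
  have hD0 : ∀ {a b : ℤ}, (∀ Y, μ[P2 μ ξ (0, 0) Y | F2 ξ a b] =ᵐ[μ] 0) →
      μ[D t | F2 ξ a b] =ᵐ[μ] 0 := fun hP =>
    condExp_ae_eq_zero_of_tendsto_eLpNorm one_le_two (fun n => integrable_Dpart n t) hDt hL2
      fun n => condExp_Dpart_ae_eq_zero hP n t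
  exact ⟨hD0 fun Y => condExp_P2_ae_eq_zero_of_snd_lt hcomm Y (by norm_num),
    hD0 fun Y => condExp_P2_ae_eq_zero_of_fst_lt hcomm Y (by norm_num)⟩

/-- **`D₀(t)` is a martingale difference in each coordinate**:
`E(D₀(t) | F_{0,−1}) = 0` and `E(D₀(t) | F_{−1,0}) = 0` a.s., for a.e. `t`. -/
theorem D0_martingale_difference
    {Ω : Type*} [MeasurableSpace Ω] (μ : Measure Ω) [IsProbabilityMeasure μ]
    (ξ : ℤ × ℤ → Ω → ℝ) (g : (ℤ × ℤ → ℝ) → ℂ) (X : ℤ × ℤ → Ω → ℂ) (D : ℝ × ℝ → Ω → ℂ)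
    (hmeas : ∀ p, Measurable (ξ p)) (hg : Measurable g)
    (hstat : Stationary2 μ ξ)
    (hXdef : ∀ (k : ℤ × ℤ) (ω : Ω), X k ω = g (fun p => ξ (p + k) ω))
    (hcomm : Commuting2 μ ξ)
    (hreg : Regular2 μ ξ (X 0))
    (hmean : ∫ ω, X 0 ω ∂μ = 0)
    (hL2 : MemLp (X 0) 2 μ)
    (hD : ∀ᵐ t ∂(volume.restrict I2),
      (∀ᵐ ω ∂μ, Tendsto (fun n => Dpart μ ξ X n t ω) atTop (𝓝 (D t ω))) ∧
      Tendsto (fun n => eLpNorm (fun ω => Dpart μ ξ X n t ω - D t ω) 2 μ) atTop (𝓝 0)) :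
    ∀ᵐ t ∂(volume.restrict I2),
      μ[D t | F2 ξ 0 (-1)] =ᵐ[μ] 0 ∧ μ[D t | F2 ξ (-1) 0] =ᵐ[μ] 0 :=
  D0_martingale_difference_general μ ξ X D hcomm hD
end
end
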